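/- arXiv:2601.08979 — 3 statements merged into one kernel-verified Lean document; each statement's English description precedes it below -/
import Mathlib

section
/- Let P_x be a symmetric real (N_x+1)×(N_x+1) matrix and let Q_t be a real (N_t+1)×(N_t+1) matrix with Q_t + Q_tᵀ = e_n e_nᵀ − e_s e_sᵀ, where e_s = (1,0,…,0)ᵀ and e_n = (0,…,0,1)ᵀ in ℝ^{N_t+1}. Define R_s = e_sᵀ ⊗ I_{N_x+1} and R_n = e_nᵀ ⊗ I_{N_x+1}. Then for every u ∈ ℝ^{(N_t+1)(N_x+1)}: uᵀ (Q_t ⊗ P_x) u = ½ (R_n u)ᵀ P_x (R_n u) − ½ (R_s u)ᵀ P_x (R_s u). -/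
/-!
Because `P_x` is symmetric, the form `u ↦ uᵀ (Q ⊗ P_x) u` only sees the symmetric part
`½ (Q + Qᵀ) = ½ (e_n e_nᵀ - e_s e_sᵀ)`, and `e_l e_lᵀ ⊗ P_x` is the `P_x`-energy of the time slice
`u (l, ·) = R_l u`.
-/

open Matrix Kronecker

namespace Matrix

theorem sub_kronecker {α l m n p : Type*} [Ring α] (A₁ A₂ : Matrix l m α) (B : Matrix n p α) :
    (A₁ - A₂) ⊗ₖ B = A₁ ⊗ₖ B - A₂ ⊗ₖ B := by
  ext
  simp [sub_mul]

variable {R m n : Type*} [CommRing R] [Fintype m] [Fintype n]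

theorem dotProduct_kronecker_mulVec (A : Matrix m m R) (P : Matrix n n R) (u : m × n → R) :
    u ⬝ᵥ (A ⊗ₖ P) *ᵥ u =
      ∑ s, ∑ t, A s t * (Function.curry u s ⬝ᵥ P *ᵥ Function.curry u t) := by
  simp only [dotProduct, mulVec, kronecker_apply, Fintype.sum_prod_type, Finset.mul_sum,
    Function.curry_apply]
  refine Finset.sum_congr rfl fun s _ => ?_
  rw [Finset.sum_comm]
  exact Finset.sum_congr rfl fun t _ => Finset.sum_congr rfl fun i _ =>
    Finset.sum_congr rfl fun j _ => by ring

theorem dotProduct_single_kronecker_mulVec [DecidableEq m] (l : m) (P : Matrix n n R)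
    (u : m × n → R) :
    u ⬝ᵥ (single l l 1 ⊗ₖ P) *ᵥ u = Function.curry u l ⬝ᵥ P *ᵥ Function.curry u l := by
  simp [dotProduct_kronecker_mulVec, single_apply, ite_and]

theorem IsSymm.two_mul_dotProduct_kronecker_mulVec {P : Matrix n n R} (hP : P.IsSymm)
    (Q : Matrix m m R) (u : m × n → R) :
    2 * (u ⬝ᵥ (Q ⊗ₖ P) *ᵥ u) = u ⬝ᵥ ((Q + Qᵀ) ⊗ₖ P) *ᵥ u := by
  have transpose_eq : u ⬝ᵥ (Qᵀ ⊗ₖ P) *ᵥ u = u ⬝ᵥ (Q ⊗ₖ P) *ᵥ u := by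
    rw [dotProduct_mulVec, ← mulVec_transpose, dotProduct_comm, ← kroneckerMap_transpose,
      transpose_transpose, hP.eq]
  rw [add_kronecker, add_mulVec, dotProduct_add, transpose_eq, two_mul]

theorem of_fst_eq_and_snd_eq_mulVec [DecidableEq m] [DecidableEq n] (l : m) (u : m × n → R) :
    (of fun i (p : m × n) => if p.1 = l ∧ p.2 = i then (1 : R) else 0) *ᵥ u =
      Function.curry u l := by
  ext i
  simp [mulVec, dotProduct, Fintype.sum_prod_type, ite_and]

end Matrix

/-- Identity (ap01a): the temporal-derivative quadratic form telescopes to half the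
difference of terminal-face and initial-face energies:
`uᵀ (Q_t ⊗ P_x) u = ½ (R_n u)ᵀ P_x (R_n u) − ½ (R_s u)ᵀ P_x (R_s u)`. -/
theorem stmt_7 (Nx Nt : ℕ)
    (Px : Matrix (Fin (Nx + 1)) (Fin (Nx + 1)) ℝ) (hPx : Px.IsSymm)
    (Qt : Matrix (Fin (Nt + 1)) (Fin (Nt + 1)) ℝ)
    (hQt : Qt + Qtᵀ =
      Matrix.single (Fin.last Nt) (Fin.last Nt) (1 : ℝ)
        - Matrix.single 0 0 (1 : ℝ))
    (Rs Rn : Matrix (Fin (Nx + 1)) (Fin (Nt + 1) × Fin (Nx + 1)) ℝ)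
    (hRs : Rs = Matrix.of fun i pp => if pp.1 = 0 ∧ pp.2 = i then (1 : ℝ) else 0)
    (hRn : Rn = Matrix.of fun i pp => if pp.1 = Fin.last Nt ∧ pp.2 = i then (1 : ℝ) else 0) :
    ∀ u : Fin (Nt + 1) × Fin (Nx + 1) → ℝ,
      u ⬝ᵥ (Qt ⊗ₖ Px).mulVec u
        = (1 / 2) * (Rn.mulVec u ⬝ᵥ Px.mulVec (Rn.mulVec u))
          - (1 / 2) * (Rs.mulVec u ⬝ᵥ Px.mulVec (Rs.mulVec u)) := by
  intro u
  have h := hPx.two_mul_dotProduct_kronecker_mulVec Qt u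
  rw [hQt, sub_kronecker, sub_mulVec, dotProduct_sub, dotProduct_single_kronecker_mulVec,
    dotProduct_single_kronecker_mulVec] at h
  rw [hRn, hRs, of_fst_eq_and_snd_eq_mulVec, of_fst_eq_and_snd_eq_mulVec]
  linarith
end

section
/- Let σ₁ > 0 and σ₃ > 0. The symmetric real 2×2 matrix [[−σ₃, (σ₁+σ₃)/2], [(σ₁+σ₃)/2, −σ₁]] is negative semidefinite if and only if σ₁ = σ₃. -/
open Matrix

/-- For `σ₁, σ₃ > 0`, the reduced interface matrix
`[[−σ₃, (σ₁+σ₃)/2], [(σ₁+σ₃)/2, −σ₁]]` is negative semidefinite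
(`xᵀ M x ≤ 0` for all `x`) if and only if `σ₁ = σ₃`. -/
theorem stmt_13 (σ₁ σ₃ : ℝ) (hσ₁ : 0 < σ₁) (hσ₃ : 0 < σ₃) :
    (∀ x : Fin 2 → ℝ,
        x ⬝ᵥ (!![-σ₃, (σ₁ + σ₃) / 2; (σ₁ + σ₃) / 2, -σ₁] :
          Matrix (Fin 2) (Fin 2) ℝ).mulVec x ≤ 0)
      ↔ σ₁ = σ₃ := by
  constructor
  · intro h
    have := h ![σ₁ + σ₃, 2 * σ₃]
    simp [dotProduct, mulVec, Fin.sum_univ_two] at this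
    have key : σ₃ * (σ₁ - σ₃)^2 ≤ 0 := by nlinarith
    have h2 : (σ₁ - σ₃)^2 ≤ 0 := le_of_mul_le_mul_left (by linarith) hσ₃
    have h3 : (σ₁ - σ₃)^2 = 0 := le_antisymm h2 (sq_nonneg _)
    have := pow_eq_zero_iff (n := 2) (by norm_num) |>.mp h3
    linarith
  · intro h x
    subst h
    simp [dotProduct, mulVec, Fin.sum_univ_two]
    nlinarith [sq_nonneg (x 0 - x 1), hσ₁.le]
end

section
/- Let κ₁, κ₂, λ > 0 and ξ ∈ ℝ. Set α₁ = √(λ/κ₁), α₂ = √(λ/κ₂), assume sin(α₁ξ) ≠ 0 and sin(α₂(1−ξ)) ≠ 0, let r = sin(α₁ξ)/sin(α₂(1−ξ)), and define w₁(x) = sin(α₁ x) and w₂(x) = r · sin(α₂(1−x)). Then the flux continuity condition κ₁ · w₁'(ξ) = κ₂ · w₂'(ξ) holds if and only if √κ₁ · (cos(α₁ξ)/sin(α₁ξ)) + √κ₂ · (cos(α₂(1−ξ))/sin(α₂(1−ξ))) = 0. -/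
/-!
Since `κ √(λ/κ) = √λ √κ`, the two fluxes are `√λ √κ₁ cos(α₁ξ)` and `-√λ √κ₂ r cos(α₂(1-ξ))`.
Cancelling `√λ ≠ 0` and dividing by `sin(α₁ξ) ≠ 0` turns flux continuity into the cotangent relation.
-/

open Real

theorem hasDerivAt_sin_const_mul (a x : ℝ) :
    HasDerivAt (fun x => sin (a * x)) (cos (a * x) * a) x := by
  simpa using ((hasDerivAt_id x).const_mul a).sin

theorem hasDerivAt_sin_const_mul_one_sub (a x : ℝ) :
    HasDerivAt (fun x => sin (a * (1 - x))) (-(cos (a * (1 - x)) * a)) x := by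
  simpa using (((hasDerivAt_const x 1).sub (hasDerivAt_id x)).const_mul a).sin

theorem mul_sqrt_div_self {κ : ℝ} (hκ : 0 ≤ κ) (lam : ℝ) : κ * √(lam / κ) = √lam * √κ := by
  rw [sqrt_div' lam hκ, mul_div_left_comm, div_sqrt, mul_comm]

theorem mul_div_add_mul_div_eq_zero_iff {a b c₁ c₂ s₁ s₂ : ℝ} (hs₁ : s₁ ≠ 0) :
    a * (c₁ / s₁) + b * (c₂ / s₂) = 0 ↔ a * c₁ = -(b * (s₁ / s₂ * c₂)) := by
  have h : (a * (c₁ / s₁) + b * (c₂ / s₂)) * s₁ = a * c₁ + b * (s₁ / s₂ * c₂) := by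
    rw [add_mul, mul_assoc, div_mul_cancel₀ c₁ hs₁]
    ring
  rw [eq_neg_iff_add_eq_zero, ← h, mul_eq_zero, or_iff_left hs₁]

theorem stmt_19_general (κ₁ κ₂ lam ξ : ℝ) (hκ₁ : 0 < κ₁) (hκ₂ : 0 < κ₂) (hlam : 0 < lam)
    (α₁ α₂ : ℝ) (hα₁ : α₁ = Real.sqrt (lam / κ₁)) (hα₂ : α₂ = Real.sqrt (lam / κ₂))
    (hsin₁ : Real.sin (α₁ * ξ) ≠ 0)
    (r : ℝ) (hr : r = Real.sin (α₁ * ξ) / Real.sin (α₂ * (1 - ξ)))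
    (w₁ w₂ : ℝ → ℝ)
    (hw₁ : w₁ = fun x => Real.sin (α₁ * x))
    (hw₂ : w₂ = fun x => r * Real.sin (α₂ * (1 - x))) :
    κ₁ * deriv w₁ ξ = κ₂ * deriv w₂ ξ ↔
      Real.sqrt κ₁ * (Real.cos (α₁ * ξ) / Real.sin (α₁ * ξ))
        + Real.sqrt κ₂ * (Real.cos (α₂ * (1 - ξ)) / Real.sin (α₂ * (1 - ξ))) = 0 := by
  subst hw₁ hw₂
  rw [(hasDerivAt_sin_const_mul α₁ ξ).deriv,
    ((hasDerivAt_sin_const_mul_one_sub α₂ ξ).const_mul r).deriv]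
  have flux₁ : κ₁ * (cos (α₁ * ξ) * α₁) = √lam * (√κ₁ * cos (α₁ * ξ)) := by
    rw [hα₁, mul_left_comm, mul_sqrt_div_self hκ₁.le]
    ring
  have flux₂ : κ₂ * (r * -(cos (α₂ * (1 - ξ)) * α₂)) =
      √lam * -(√κ₂ * (r * cos (α₂ * (1 - ξ)))) := by
    rw [hα₂, mul_left_comm, mul_neg, mul_left_comm, mul_sqrt_div_self hκ₂.le]
    ring
  rw [flux₁, flux₂, mul_right_inj' (sqrt_pos.2 hlam).ne',
    mul_div_add_mul_div_eq_zero_iff hsin₁, hr]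

/-- Eigenvalue condition (eq:eig) of Appendix B: with `α_i = √(λ/κ_i)`,
`r = sin(α₁ξ)/sin(α₂(1−ξ))`, `w₁(x) = sin(α₁x)` and `w₂(x) = r sin(α₂(1−x))`,
flux continuity `κ₁ w₁'(ξ) = κ₂ w₂'(ξ)` at the interface holds if and only if
`√κ₁ cot(α₁ξ) + √κ₂ cot(α₂(1−ξ)) = 0`. -/
theorem stmt_19 (κ₁ κ₂ lam ξ : ℝ) (hκ₁ : 0 < κ₁) (hκ₂ : 0 < κ₂) (hlam : 0 < lam)
    (α₁ α₂ : ℝ) (hα₁ : α₁ = Real.sqrt (lam / κ₁)) (hα₂ : α₂ = Real.sqrt (lam / κ₂))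
    (hsin₁ : Real.sin (α₁ * ξ) ≠ 0) (hsin₂ : Real.sin (α₂ * (1 - ξ)) ≠ 0)
    (r : ℝ) (hr : r = Real.sin (α₁ * ξ) / Real.sin (α₂ * (1 - ξ)))
    (w₁ w₂ : ℝ → ℝ)
    (hw₁ : w₁ = fun x => Real.sin (α₁ * x))
    (hw₂ : w₂ = fun x => r * Real.sin (α₂ * (1 - x))) :
    κ₁ * deriv w₁ ξ = κ₂ * deriv w₂ ξ ↔
      Real.sqrt κ₁ * (Real.cos (α₁ * ξ) / Real.sin (α₁ * ξ))
        + Real.sqrt κ₂ * (Real.cos (α₂ * (1 - ξ)) / Real.sin (α₂ * (1 - ξ))) = 0 :=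
  stmt_19_general κ₁ κ₂ lam ξ hκ₁ hκ₂ hlam α₁ α₂ hα₁ hα₂ hsin₁ r hr w₁ w₂ hw₁ hw₂
end
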